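/- If P is an n×n row-stochastic matrix (nonnegative entries with each row summing to 1), then the matrix I − P admits an LU factorization without pivoting. -/
import Mathlib

open Matrix Finset

/-- Key lemma: any real matrix with nonpositive off-diagonal entries and
nonnegative row sums admits an LU factorization without pivoting. -/
lemma lu_aux : ∀ (n : ℕ) (A : Matrix (Fin n) (Fin n) ℝ),
    (∀ i j, i ≠ j → A i j ≤ 0) → (∀ i, 0 ≤ ∑ j, A i j) →
    ∃ L U : Matrix (Fin n) (Fin n) ℝ,
      (∀ i j, i < j → L i j = 0) ∧ (∀ i j, j < i → U i j = 0) ∧ A = L * U := by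
  intro n
  induction n with
  | zero =>
    intro A _ _
    exact ⟨0, 0, fun i => i.elim0, fun i => i.elim0, Subsingleton.elim _ _⟩
  | succ n ih =>
    intro A hoff hrow
    have htail : ∀ i : Fin (n+1), ∑ j : Fin n, A i j.succ = (∑ j, A i j) - A i 0 := by
      intro i; rw [Fin.sum_univ_succ]; ring
    have htail0 : ∑ j : Fin n, A 0 j.succ ≤ 0 :=
      Finset.sum_nonpos fun j _ => hoff 0 j.succ (Fin.succ_ne_zero j).symm
    have h00 : 0 ≤ A 0 0 := by
      have h1 := hrow 0
      have h2 := htail 0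
      linarith
    by_cases hp : A 0 0 = 0
    · -- pivot zero: the whole first row is zero
      have hz : ∑ j : Fin n, A 0 j.succ = 0 := by
        have h1 := hrow 0
        have h2 := htail 0
        linarith
      have he := (Finset.sum_eq_zero_iff_of_nonpos
        (fun j _ => hoff 0 j.succ (Fin.succ_ne_zero j).symm)).mp hz
      have hrow0 : ∀ j : Fin (n+1), A 0 j = 0 := by
        intro j
        refine Fin.cases hp (fun j' => he j' (Finset.mem_univ _)) j
      obtain ⟨L', U', hL', hU', hS⟩ := ih (fun i j => A i.succ j.succ)
        (fun i j hij => hoff _ _ (fun h => hij (Fin.succ_injective _ h)))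
        (by
          intro i
          rw [htail i.succ]
          have h1 := hrow i.succ
          have h2 := hoff i.succ 0 (Fin.succ_ne_zero i)
          linarith)
      refine ⟨Matrix.of (Fin.cons (Fin.cons 0 0) (fun i' => Fin.cons (A i'.succ 0) (L' i'))),
              Matrix.of (Fin.cons (Fin.cons 1 0) (fun i' => Fin.cons 0 (U' i'))), ?_, ?_, ?_⟩
      · intro i j hij
        obtain rfl | ⟨i', rfl⟩ := Fin.eq_zero_or_eq_succ i
        · obtain rfl | ⟨j', rfl⟩ := Fin.eq_zero_or_eq_succ j <;> simp
        · obtain rfl | ⟨j', rfl⟩ := Fin.eq_zero_or_eq_succ j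
          · exact absurd hij (Fin.not_lt_zero _)
          · simp only [Matrix.of_apply, Fin.cons_succ]
            exact hL' i' j' (by simpa [Fin.succ_lt_succ_iff] using hij)
      · intro i j hji
        obtain rfl | ⟨i', rfl⟩ := Fin.eq_zero_or_eq_succ i
        · exact absurd hji (Fin.not_lt_zero _)
        · obtain rfl | ⟨j', rfl⟩ := Fin.eq_zero_or_eq_succ j
          · simp
          · simp only [Matrix.of_apply, Fin.cons_succ]
            exact hU' i' j' (by simpa [Fin.succ_lt_succ_iff] using hji)
      · ext i j
        rw [Matrix.mul_apply, Fin.sum_univ_succ]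
        obtain rfl | ⟨i', rfl⟩ := Fin.eq_zero_or_eq_succ i
        · simp [hrow0 j]
        · obtain rfl | ⟨j', rfl⟩ := Fin.eq_zero_or_eq_succ j
          · simp
          · have h := congrFun (congrFun hS i') j'
            rw [Matrix.mul_apply] at h
            simp only [Matrix.of_apply, Fin.cons_succ, Fin.cons_zero]
            rw [← h]
            simp
    · -- pivot positive
      have hpos : 0 < A 0 0 := lt_of_le_of_ne h00 (Ne.symm hp)
      obtain ⟨L', U', hL', hU', hS⟩ := ih
        (fun i j => A i.succ j.succ - A i.succ 0 * A 0 j.succ / A 0 0)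
        (by
          intro i j hij
          have a1 := hoff i.succ j.succ (fun h => hij (Fin.succ_injective _ h))
          have a2 := hoff i.succ 0 (Fin.succ_ne_zero i)
          have a3 := hoff 0 j.succ (Fin.succ_ne_zero j).symm
          have hm : 0 ≤ A i.succ 0 * A 0 j.succ := by nlinarith
          have h4 : 0 ≤ A i.succ 0 * A 0 j.succ / A 0 0 := div_nonneg hm hpos.le
          linarith)
        (by
          intro i
          have hsum : ∑ j : Fin n, (A i.succ j.succ - A i.succ 0 * A 0 j.succ / A 0 0)
              = (∑ j : Fin n, A i.succ j.succ)
                - A i.succ 0 / A 0 0 * ∑ j : Fin n, A 0 j.succ := by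
            rw [Finset.sum_sub_distrib, Finset.mul_sum]
            congr 1
            refine Finset.sum_congr rfl fun j _ => ?_
            field_simp
          rw [hsum, htail i.succ, htail 0]
          have h1 := hrow i.succ
          have h2 := hrow 0
          have a2 := hoff i.succ 0 (Fin.succ_ne_zero i)
          have h3 : A i.succ 0 / A 0 0 ≤ 0 := div_nonpos_of_nonpos_of_nonneg a2 h00
          have h4 : A i.succ 0 / A 0 0 * A 0 0 = A i.succ 0 := div_mul_cancel₀ _ hp
          nlinarith [mul_nonpos_of_nonpos_of_nonneg h3 (hrow 0)])
      refine ⟨Matrix.of (Fin.cons (Fin.cons 1 0)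
                (fun i' => Fin.cons (A i'.succ 0 / A 0 0) (L' i'))),
              Matrix.of (Fin.cons (Fin.cons (A 0 0) (fun j' => A 0 j'.succ))
                (fun i' => Fin.cons 0 (U' i'))), ?_, ?_, ?_⟩
      · intro i j hij
        obtain rfl | ⟨i', rfl⟩ := Fin.eq_zero_or_eq_succ i
        · obtain rfl | ⟨j', rfl⟩ := Fin.eq_zero_or_eq_succ j
          · exact absurd hij (lt_irrefl _)
          · simp
        · obtain rfl | ⟨j', rfl⟩ := Fin.eq_zero_or_eq_succ j
          · exact absurd hij (Fin.not_lt_zero _)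
          · simp only [Matrix.of_apply, Fin.cons_succ]
            exact hL' i' j' (by simpa [Fin.succ_lt_succ_iff] using hij)
      · intro i j hji
        obtain rfl | ⟨i', rfl⟩ := Fin.eq_zero_or_eq_succ i
        · exact absurd hji (Fin.not_lt_zero _)
        · obtain rfl | ⟨j', rfl⟩ := Fin.eq_zero_or_eq_succ j
          · simp
          · simp only [Matrix.of_apply, Fin.cons_succ]
            exact hU' i' j' (by simpa [Fin.succ_lt_succ_iff] using hji)
      · ext i j
        rw [Matrix.mul_apply, Fin.sum_univ_succ]
        obtain rfl | ⟨i', rfl⟩ := Fin.eq_zero_or_eq_succ i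
        · obtain rfl | ⟨j', rfl⟩ := Fin.eq_zero_or_eq_succ j <;> simp
        · obtain rfl | ⟨j', rfl⟩ := Fin.eq_zero_or_eq_succ j
          · simp only [Matrix.of_apply, Fin.cons_succ, Fin.cons_zero]
            simp [div_mul_cancel₀ _ hp]
          · have h := congrFun (congrFun hS i') j'
            rw [Matrix.mul_apply] at h
            simp only [Matrix.of_apply, Fin.cons_succ, Fin.cons_zero]
            rw [← h]
            ring

/-- If P is an n×n row-stochastic matrix, then I − P admits an LU
factorization without pivoting. -/
theorem stmt_10 (n : ℕ) (P : Matrix (Fin n) (Fin n) ℝ)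
    (hpos : ∀ i j, 0 ≤ P i j)
    (hrow : ∀ i, ∑ j, P i j = 1) :
    ∃ L U : Matrix (Fin n) (Fin n) ℝ,
      (∀ i j, i < j → L i j = 0) ∧
      (∀ i j, j < i → U i j = 0) ∧
      (1 : Matrix (Fin n) (Fin n) ℝ) - P = L * U := by
  apply lu_aux n (1 - P)
  · intro i j hij
    have := hpos i j
    simp [Matrix.sub_apply, Matrix.one_apply_ne hij]
    linarith
  · intro i
    have h : ∑ j, ((1 : Matrix (Fin n) (Fin n) ℝ) - P) i j
        = (∑ j, (1 : Matrix (Fin n) (Fin n) ℝ) i j) - ∑ j, P i j := by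
      rw [← Finset.sum_sub_distrib]; rfl
    rw [h, hrow i]
    simp [Matrix.one_apply]
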